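/- arXiv:1611.03118 — 3 statements merged into one kernel-verified Lean document; each statement's English description precedes it below -/
import Mathlib

section
/- For every α>0 and every sufficiently large n, every n-vertex graph L=(V,E) with |E| ≥ (5/9+α)n²/2 contains an induced subgraph R ⊆ L satisfying: (i) |V(R)| ≥ (2/3+α/2)n; (ii) e_L(V(R), V∖V(R)) ≤ αn²/4 and e(R) ≥ (5/9+α/2)n²/2 − (n−|V(R)|)²/2; and (iii) R is (α/72)-inseparable. -/
open Finset

variable {V : Type} [Fintype V] [DecidableEq V]

/-- The degree of a vertex in a hypergraph given by its edge set. -/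
def hypDeg (E : Finset (Finset V)) (v : V) : ℕ :=
  (E.filter (fun e => v ∈ e)).card

/-- The pair degree of two vertices in a hypergraph. -/
def pairDeg (E : Finset (Finset V)) (u v : V) : ℕ :=
  (E.filter (fun e => u ∈ e ∧ v ∈ e)).card

/-- The joint neighbourhood `N(u,v) = {w : uvw ∈ E}`. -/
def jointNbhd (E : Finset (Finset V)) (u v : V) : Finset V :=
  Finset.univ.filter (fun w => ({u, v, w} : Finset V) ∈ E)

/-- A 3-uniform hypergraph has a tight Hamiltonian cycle: a cyclic ordering of all
vertices such that every three cyclically consecutive vertices form an edge. -/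
def HasTightHamCycle (E : Finset (Finset V)) : Prop :=
  ∃ x : ZMod (Fintype.card V) → V, Function.Bijective x ∧
    ∀ i : ZMod (Fintype.card V), ({x i, x (i + 1), x (i + 2)} : Finset V) ∈ E

/-- The link graph of a vertex `v`. -/
def linkGraph (E : Finset (Finset V)) (v : V) : SimpleGraph V where
  Adj x y := x ≠ y ∧ ({v, x, y} : Finset V) ∈ E
  symm := ⟨by
    rintro x y ⟨hxy, he⟩
    exact ⟨hxy.symm, by rwa [Finset.pair_comm y x]⟩⟩
  loopless := ⟨fun x h => h.1 rfl⟩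

instance (E : Finset (Finset V)) (v : V) : DecidableRel (linkGraph E v).Adj :=
  fun x y => inferInstanceAs (Decidable (x ≠ y ∧ ({v, x, y} : Finset V) ∈ E))

/-- Number of edges of a graph with both endpoints in `A`. -/
def eIn (G : SimpleGraph V) [DecidableRel G.Adj] (A : Finset V) : ℕ :=
  (G.edgeFinset.filter (fun e => e ∈ A.sym2)).card

/-- Number of edges of a graph with one endpoint in `A` and one in `B`
(for disjoint `A` `B`, as the count of ordered pairs). -/
def eBetween (G : SimpleGraph V) [DecidableRel G.Adj] (A B : Finset V) : ℕ :=
  ((A ×ˢ B).filter (fun p => G.Adj p.1 p.2)).card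

/-- Number of `x`-`y` paths of length `k` in the subgraph of `G` induced on `A`. -/
noncomputable def pathCount (G : SimpleGraph V) (A : Finset V) (x y : V) (k : ℕ) : ℕ :=
  Nat.card {p : Fin (k + 1) → V // Function.Injective p ∧ (∀ i, p i ∈ A) ∧
    p ⟨0, by omega⟩ = x ∧ p ⟨k, by omega⟩ = y ∧
    ∀ (i : ℕ) (h : i + 1 < k + 1), G.Adj (p ⟨i, by omega⟩) (p ⟨i + 1, h⟩)}

/-- The subgraph of `G` induced on `A` is `(β,ℓ)`-robust. -/
def IsRobust (G : SimpleGraph V) (A : Finset V) (β : ℝ) (ℓ : ℕ) : Prop :=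
  ∀ x ∈ A, ∀ y ∈ A, x ≠ y → β * (A.card : ℝ) ^ (ℓ - 1) ≤ (pathCount G A x y ℓ : ℝ)

/-- The subgraph of `L` induced on `U` is `μ`-inseparable. -/
def IsInseparable (L : SimpleGraph V) [DecidableRel L.Adj] (U : Finset V) (μ : ℝ) : Prop :=
  (∀ v ∈ U, μ * (U.card : ℝ) ≤ ((U.filter (fun u => L.Adj v u)).card : ℝ)) ∧
  (∀ X Y : Finset V, Disjoint X Y → X ∪ Y = U →
    μ * (U.card : ℝ) ≤ (X.card : ℝ) → μ * (U.card : ℝ) ≤ (Y.card : ℝ) →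
    μ ^ 2 * (U.card : ℝ) ^ 2 ≤ (eBetween L X Y : ℝ))

/-- The Setup: a `3`-uniform hypergraph `E` with minimum vertex degree at least
`(5/9+α)n²/2` together with, for each vertex `v`, (the vertex set `Rv v` of) an induced
subgraph `R_v` of the link graph `L_v` as provided by the Robust subgraphs proposition. -/
def SetupHyp (α β : ℝ) (ℓ : ℕ) (E : Finset (Finset V)) (Rv : V → Finset V) : Prop :=
  (∀ e ∈ E, e.card = 3) ∧
  (∀ v : V, (5/9 + α) * (Fintype.card V : ℝ) ^ 2 / 2 ≤ (hypDeg E v : ℝ)) ∧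
  (∀ v : V, (2/3 + α/2) * (Fintype.card V : ℝ) ≤ ((Rv v).card : ℝ)) ∧
  (∀ v : V, (eBetween (linkGraph E v) (Rv v) (Rv v)ᶜ : ℝ) ≤ α * (Fintype.card V : ℝ) ^ 2 / 4) ∧
  (∀ v : V, (5/9 + α/2) * (Fintype.card V : ℝ) ^ 2 / 2
      - ((Fintype.card V : ℝ) - ((Rv v).card : ℝ)) ^ 2 / 2 ≤ (eIn (linkGraph E v) (Rv v) : ℝ)) ∧
  (∀ v : V, IsRobust (linkGraph E v) (Rv v) β ℓ)

/-- The pair `xy` is `ζ`-connectable: `xy` is an edge of `R_v` for at least `ζn` vertices `v`. -/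
def Connectable (E : Finset (Finset V)) (Rv : V → Finset V) (ζ : ℝ) (x y : V) : Prop :=
  ζ * (Fintype.card V : ℝ) ≤
    (({v : V | x ∈ Rv v ∧ y ∈ Rv v ∧ (linkGraph E v).Adj x y} : Set V).ncard : ℝ)

/-- `f` enumerates the vertices of a tight path (of length `m - 2`) in the hypergraph `E`. -/
def IsTightPath (E : Finset (Finset V)) {m : ℕ} (f : Fin m → V) : Prop :=
  Function.Injective f ∧
  ∀ (i : ℕ) (h : i + 2 < m),
    ({f ⟨i, by omega⟩, f ⟨i + 1, by omega⟩, f ⟨i + 2, h⟩} : Finset V) ∈ E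

/-- Number of tight `(x,y)`-`(z,w)`-paths of length `3(ℓ+1)` in `E`. -/
noncomputable def connCount (E : Finset (Finset V)) (ℓ : ℕ) (x y z w : V) : ℕ :=
  Nat.card {f : Fin (3*ℓ+5) → V // IsTightPath E f ∧
    f ⟨0, by omega⟩ = x ∧ f ⟨1, by omega⟩ = y ∧
    f ⟨3*ℓ+3, by omega⟩ = z ∧ f ⟨3*ℓ+4, by omega⟩ = w}

/-- Number of tight `(x,y)`-`(z,w)`-paths of length `3(ℓ+1)` in `E` all of whose internal
vertices lie in `Res`. -/
noncomputable def connCountIn (E : Finset (Finset V)) (ℓ : ℕ) (Res : Finset V) (x y z w : V) : ℕ :=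
  Nat.card {f : Fin (3*ℓ+5) → V // IsTightPath E f ∧
    f ⟨0, by omega⟩ = x ∧ f ⟨1, by omega⟩ = y ∧
    f ⟨3*ℓ+3, by omega⟩ = z ∧ f ⟨3*ℓ+4, by omega⟩ = w ∧
    ∀ i : Fin (3*ℓ+5), 2 ≤ (i : ℕ) → (i : ℕ) ≤ 3*ℓ+2 → f i ∈ Res}

/-- Conclusion of the Connecting Lemma for the parameters `(ζ, θ)`. -/
def ConnProp (E : Finset (Finset V)) (Rv : V → Finset V) (ζ θ : ℝ) (ℓ : ℕ) : Prop :=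
  ∀ x y z w : V, ([x, y, z, w] : List V).Nodup →
    Connectable E Rv ζ x y → Connectable E Rv ζ z w →
    θ * (Fintype.card V : ℝ) ^ (3*ℓ+1) ≤ (connCount E ℓ x y z w : ℝ)

/-- Conclusion of the Reservoir Lemma: every pair of `ζ`-connectable pairs is connected by
many tight paths with all internal vertices in `Res`. -/
def ReservoirProp (E : Finset (Finset V)) (Rv : V → Finset V) (ζ θ : ℝ) (ℓ : ℕ)
    (Res : Finset V) : Prop :=
  ∀ x y z w : V, ([x, y, z, w] : List V).Nodup →
    Connectable E Rv ζ x y → Connectable E Rv ζ z w →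
    θ * (Res.card : ℝ) ^ (3*ℓ+1) / 2 ≤ (connCountIn E ℓ Res x y z w : ℝ)

/-- Setup 2: the Connecting Lemma holds for `(ζ*,θ*)` and `(ζ**,θ**)` and `Res` is a
reservoir set. -/
def Setup2Hyp (ζs θs ζss θss : ℝ) (ℓ : ℕ) (E : Finset (Finset V)) (Rv : V → Finset V)
    (Res : Finset V) : Prop :=
  ConnProp E Rv ζs θs ℓ ∧ ConnProp E Rv ζss θss ℓ ∧
  θs ^ 2 * (Fintype.card V : ℝ) / 2 ≤ (Res.card : ℝ) ∧
  (Res.card : ℝ) ≤ θs ^ 2 * (Fintype.card V : ℝ) ∧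
  ReservoirProp E Rv ζss θss ℓ Res

/-- A vertex `z` is absorbable. -/
def Absorbable (E : Finset (Finset V)) (Rv : V → Finset V) (ζs : ℝ) (z : V) : Prop :=
  (Fintype.card V : ℝ) ^ 4 / 2 ^ 21 ≤
    (({q : V × V × V × V |
        ({q.1, q.2.1, z} : Finset V) ∈ E ∧
        ({q.2.1, z, q.2.2.1} : Finset V) ∈ E ∧
        ({z, q.2.2.1, q.2.2.2} : Finset V) ∈ E ∧
        ({q.1, q.2.1, q.2.2.1} : Finset V) ∈ E ∧
        ({q.2.1, q.2.2.1, q.2.2.2} : Finset V) ∈ E ∧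
        Connectable E Rv ζs q.1 q.2.1 ∧
        Connectable E Rv ζs q.2.2.1 q.2.2.2} : Set (V × V × V × V)).ncard : ℝ)

/-- `(a,b,c,d,z,x,y,y',x')` is a `v`-absorber. -/
def IsAbsorber (E : Finset (Finset V)) (Rv : V → Finset V) (ζs : ℝ)
    (v a b c d z x y y' x' : V) : Prop :=
  ([a, b, c, d, z, x, y, y', x'] : List V).Nodup ∧
  v ∉ ([a, b, c, d, z, x, y, y', x'] : List V) ∧
  ({z, a, b} : Finset V) ∈ E ∧ ({z, b, c} : Finset V) ∈ E ∧ ({z, c, d} : Finset V) ∈ E ∧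
  ({z, x, y} : Finset V) ∈ E ∧ ({z, y, y'} : Finset V) ∈ E ∧ ({z, y', x'} : Finset V) ∈ E ∧
  ({x, y, y'} : Finset V) ∈ E ∧ ({y, y', x'} : Finset V) ∈ E ∧
  Connectable E Rv ζs a b ∧ Connectable E Rv ζs c d ∧
  Connectable E Rv ζs x y ∧ Connectable E Rv ζs y' x' ∧
  ({v, a, b} : Finset V) ∈ E ∧ ({v, b, c} : Finset V) ∈ E ∧ ({v, c, d} : Finset V) ∈ E

/-!
Clean `L` greedily: starting from `U = V`, while the graph induced on `U` is not
`α/72`-inseparable, delete either a vertex of degree `< α|U|/72` in `U` or the smaller side `Y`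
of a sparse cut. Each deleted vertex destroys at most `αn/24` edges inside `U` and adds at most
`αn/24` to the cut, since a sparse cut has at most `(α|U|/72)² ≤ (α/24)|Y|n` edges. With these
losses the edge count excludes `n/3 ≤ |U| < (2/3 + α/2)n`, and no step can jump over this
window: a cut step keeps at least half of `U`, a vertex step only one vertex less.
-/

section EdgeCounts

variable (L : SimpleGraph V) [DecidableRel L.Adj]

omit [Fintype V] [DecidableEq V] in
theorem eBetween_comm (A B : Finset V) : eBetween L A B = eBetween L B A :=
  @Rel.card_interedges_comm V L.Adj _ L.symm A B

omit [Fintype V] [DecidableEq V] in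
theorem eBetween_singleton_le (A : Finset V) (v : V) :
    eBetween L A {v} ≤ #{a ∈ A | L.Adj v a} := by
  refine Finset.card_le_card_of_injOn Prod.fst ?_ ?_
  · rintro ⟨a, b⟩ hab
    simp only [coe_filter, mem_product, mem_singleton, Set.mem_ofPred_eq] at hab
    obtain ⟨⟨ha, rfl⟩, hadj⟩ := hab
    simpa [ha] using hadj.symm
  · rintro ⟨a, b⟩ hab ⟨a', b'⟩ hab' (rfl : a = a')
    simp only [coe_filter, mem_product, mem_singleton, Set.mem_ofPred_eq] at hab hab'
    rw [hab.1.2, hab'.1.2]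

theorem eBetween_compl_le_of_subset {X U : Finset V} (hXU : X ⊆ U) :
    eBetween L X Xᶜ ≤ eBetween L X (U \ X) + eBetween L U Uᶜ := by
  have hcompl : Xᶜ = (U \ X) ∪ Uᶜ := by
    ext a
    have := @hXU a
    simp only [mem_compl, mem_union, mem_sdiff]
    tauto
  calc eBetween L X Xᶜ ≤ eBetween L X (U \ X) + eBetween L X Uᶜ := by
        rw [hcompl, eBetween, product_union, filter_union]
        exact card_union_le _ _
    _ ≤ eBetween L X (U \ X) + eBetween L U Uᶜ := by
        gcongr
        exact card_le_card (L.interedges_mono hXU subset_rfl)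

theorem eIn_univ : eIn L univ = #L.edgeFinset := by
  simp [eIn]

theorem eIn_le_choose_two (A : Finset V) : eIn L A ≤ (#A).choose 2 := by
  rw [← Sym2.card_image_offDiag]
  refine card_le_card fun e he => ?_
  induction e using Sym2.ind with
  | _ a b =>
    simp only [mem_filter, SimpleGraph.mem_edgeFinset, SimpleGraph.mem_edgeSet,
      mk_mem_sym2_iff] at he
    exact mem_image.2 ⟨(a, b), mem_offDiag.2 ⟨he.2.1, he.2.2, he.1.ne⟩, rfl⟩

theorem eIn_le_sq_div_two (A : Finset V) : (eIn L A : ℝ) ≤ (#A : ℝ) ^ 2 / 2 := by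
  have h : (eIn L A : ℝ) ≤ (#A : ℝ) * (#A - 1) / 2 := by
    rw [← Nat.cast_choose_two]
    exact_mod_cast eIn_le_choose_two L A
  nlinarith [(Nat.cast_nonneg (α := ℝ) #A)]

theorem eIn_union_le (X Y : Finset V) :
    eIn L (X ∪ Y) ≤ eIn L X + eIn L Y + eBetween L X Y := by
  have hsub : L.edgeFinset.filter (· ∈ (X ∪ Y).sym2) ⊆
      L.edgeFinset.filter (· ∈ X.sym2) ∪ L.edgeFinset.filter (· ∈ Y.sym2) ∪
        (L.interedges X Y).image (fun p => s(p.1, p.2)) := by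
    intro e
    induction e using Sym2.ind with
    | _ a b =>
      simp only [mem_filter, SimpleGraph.mem_edgeFinset, SimpleGraph.mem_edgeSet,
        mk_mem_sym2_iff, mem_union, mem_image, SimpleGraph.mem_interedges_iff]
      rintro ⟨hadj, ha | ha, hb | hb⟩
      · exact .inl (.inl ⟨hadj, ha, hb⟩)
      · exact .inr ⟨(a, b), ⟨ha, hb, hadj⟩, rfl⟩
      · exact .inr ⟨(b, a), ⟨hb, ha, hadj.symm⟩, Sym2.eq_swap⟩
      · exact .inl (.inr ⟨hadj, ha, hb⟩)
  calc eIn L (X ∪ Y) ≤ _ := card_le_card hsub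
    _ ≤ _ := card_union_le _ _
    _ ≤ eIn L X + eIn L Y + eBetween L X Y := by
        gcongr
        exacts [card_union_le _ _, card_image_le]

theorem eIn_le_of_subset {X U : Finset V} (hXU : X ⊆ U) :
    eIn L U ≤ eIn L X + eIn L (U \ X) + eBetween L X (U \ X) := by
  simpa only [union_sdiff_of_subset hXU] using eIn_union_le L X (U \ X)

end EdgeCounts

/-- `n - #U` counts the deleted vertices; each may cost `α n / 24` edges inside `U` and add as
many to the cut. -/
structure CleaningInvariant (α : ℝ) (L : SimpleGraph V) [DecidableRel L.Adj] (U : Finset V) :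
    Prop where
  eIn_ge : (5/9 + α) * (Fintype.card V : ℝ) ^ 2 / 2 - ((Fintype.card V : ℝ) - #U) ^ 2 / 2
      - α / 24 * ((Fintype.card V : ℝ) - #U) * Fintype.card V ≤ eIn L U
  eBetween_le : (eBetween L U Uᶜ : ℝ) ≤ α / 24 * ((Fintype.card V : ℝ) - #U) * Fintype.card V
  card_ge : (Fintype.card V : ℝ) / 3 ≤ #U

namespace CleaningInvariant

variable {α : ℝ} {L : SimpleGraph V} [DecidableRel L.Adj] {U : Finset V}

theorem univ (hE : (5/9 + α) * (Fintype.card V : ℝ) ^ 2 / 2 ≤ #L.edgeFinset) :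
    CleaningInvariant α L univ where
  eIn_ge := by simpa [eIn_univ] using hE
  eBetween_le := by simp [eBetween]
  card_ge := by
    rw [card_univ]
    linarith [Nat.cast_nonneg (α := ℝ) (Fintype.card V)]

theorem card_ge_two_thirds (hα : 0 < α) (h : CleaningInvariant α L U) :
    (2/3 + α/2) * (Fintype.card V : ℝ) ≤ #U := by
  have hun : (#U : ℝ) ≤ Fintype.card V := by exact_mod_cast card_le_univ U
  have hu0 : (0 : ℝ) ≤ #U := Nat.cast_nonneg _
  have hn0 : (0 : ℝ) ≤ Fintype.card V := Nat.cast_nonneg _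
  set n : ℝ := (Fintype.card V : ℝ)
  set u : ℝ := (#U : ℝ)
  by_contra! hsmall
  -- `eIn L U ≤ u²/2` and `u² + (n - u)² - 5n²/9 = 2 (u - 2n/3) (u - n/3)`
  have hfactor : 11/12 * α * n ^ 2 ≤ 2 * (u - 2/3 * n) * (u - n/3) := by
    nlinarith [h.eIn_ge, eIn_le_sq_div_two L U, h.card_ge]
  have hn : 0 < n := by nlinarith
  rcases le_or_gt u (2/3 * n) with hu | hu <;> nlinarith [h.card_ge, mul_pos hα (mul_pos hn hn)]

theorem eBetween_le_quarter (hα : 0 ≤ α) (h : CleaningInvariant α L U) :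
    (eBetween L U Uᶜ : ℝ) ≤ α * (Fintype.card V : ℝ) ^ 2 / 4 := by
  have hun : (#U : ℝ) ≤ Fintype.card V := by exact_mod_cast card_le_univ U
  nlinarith [h.eBetween_le, mul_nonneg hα (Nat.cast_nonneg (α := ℝ) #U)]

theorem eIn_ge_of_half (hα : 0 ≤ α) (h : CleaningInvariant α L U) :
    (5/9 + α/2) * (Fintype.card V : ℝ) ^ 2 / 2 - ((Fintype.card V : ℝ) - #U) ^ 2 / 2
      ≤ eIn L U := by
  have hun : (#U : ℝ) ≤ Fintype.card V := by exact_mod_cast card_le_univ U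
  nlinarith [h.eIn_ge, mul_nonneg hα (Nat.cast_nonneg (α := ℝ) #U)]

theorem of_subset (h : CleaningInvariant α L U) {X : Finset V} (hXU : X ⊆ U)
    (hcut : (eBetween L X (U \ X) : ℝ) ≤ α / 24 * #(U \ X) * Fintype.card V)
    (hX : (Fintype.card V : ℝ) / 3 ≤ #X) : CleaningInvariant α L X := by
  have hcard : (#(U \ X) : ℝ) = #U - #X := by
    rw [card_sdiff_of_subset hXU, Nat.cast_sub (card_le_card hXU)]
  have hin : (eIn L U : ℝ) ≤ eIn L X + eIn L (U \ X) + eBetween L X (U \ X) := by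
    exact_mod_cast eIn_le_of_subset L hXU
  have hout : (eBetween L X Xᶜ : ℝ) ≤ eBetween L X (U \ X) + eBetween L U Uᶜ := by
    exact_mod_cast eBetween_compl_le_of_subset L hXU
  have hUn : (#U : ℝ) ≤ Fintype.card V := by exact_mod_cast card_le_univ U
  have hXU' : (#X : ℝ) ≤ #U := by exact_mod_cast card_le_card hXU
  have hinY := eIn_le_sq_div_two L (U \ X)
  rw [hcard] at hcut hinY
  refine ⟨?_, ?_, hX⟩
  · nlinarith [h.eIn_ge, mul_nonneg (sub_nonneg.2 hUn) (sub_nonneg.2 hXU')]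
  · nlinarith [h.eBetween_le]

theorem erase (hα : 0 < α) (hn : 3 ≤ Fintype.card V) (h : CleaningInvariant α L U) {v : V}
    (hv : v ∈ U) (hdeg : (#{u ∈ U | L.Adj v u} : ℝ) < α / 72 * #U) :
    CleaningInvariant α L (U.erase v) := by
  have hUn : (#U : ℝ) ≤ Fintype.card V := by exact_mod_cast card_le_univ U
  have hn' : (3 : ℝ) ≤ Fintype.card V := by exact_mod_cast hn
  refine h.of_subset (erase_subset v U) ?_ ?_
  · rw [sdiff_erase_self hv, card_singleton, Nat.cast_one, mul_one]
    have hdeg' : (eBetween L (U.erase v) {v} : ℝ) ≤ #{u ∈ U | L.Adj v u} := by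
      exact_mod_cast (eBetween_singleton_le L _ v).trans
        (card_le_card (filter_subset_filter _ (erase_subset v U)))
    nlinarith
  · rw [card_erase_of_mem hv, Nat.cast_sub (card_pos.2 ⟨v, hv⟩), Nat.cast_one]
    nlinarith [h.card_ge_two_thirds hα]

theorem of_sparse_cut (hα : 0 < α) (h : CleaningInvariant α L U) {X Y : Finset V}
    (hdisj : Disjoint X Y) (hXY : X ∪ Y = U) (hY : α / 72 * #U ≤ (#Y : ℝ))
    (hcut : (eBetween L X Y : ℝ) < (α / 72) ^ 2 * (#U : ℝ) ^ 2) (hYX : #Y ≤ #X) :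
    CleaningInvariant α L X := by
  have hXU : X ⊆ U := hXY ▸ subset_union_left
  have hUX : U \ X = Y := by rw [← hXY, union_sdiff_left, sdiff_eq_self_of_disjoint hdisj.symm]
  have hsum : (#X : ℝ) + #Y = #U := by exact_mod_cast hXY ▸ (card_union_of_disjoint hdisj).symm
  have hYX' : (#Y : ℝ) ≤ #X := by exact_mod_cast hYX
  have hUn : (#U : ℝ) ≤ Fintype.card V := by exact_mod_cast card_le_univ U
  refine h.of_subset hXU ?_ ?_
  · rw [hUX]
    have hμU : 0 ≤ α / 72 * #U := by positivity
    calc (eBetween L X Y : ℝ) ≤ (α / 72 * #U) * (α / 72 * #U) := by linarith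
      _ ≤ (α / 72 * #U) * #Y := mul_le_mul_of_nonneg_left hY hμU
      _ ≤ α / 24 * #Y * Fintype.card V := by
        nlinarith [mul_nonneg (mul_nonneg hα.le (Nat.cast_nonneg (α := ℝ) #Y)) (sub_nonneg.2 hUn)]
  · nlinarith [h.card_ge_two_thirds hα]

theorem exists_isInseparable (hα : 0 < α) (hn : 3 ≤ Fintype.card V)
    (h : CleaningInvariant α L U) :
    ∃ U' : Finset V, CleaningInvariant α L U' ∧ IsInseparable L U' (α / 72) := by
  induction hU : #U using Nat.strong_induction_on generalizing U with
  | _ k ih =>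
    subst hU
    by_cases hins : IsInseparable L U (α / 72)
    · exact ⟨U, h, hins⟩
    simp only [IsInseparable, not_and_or, not_forall, not_le, exists_prop] at hins
    rcases hins with ⟨v, hv, hdeg⟩ | ⟨X, Y, hdisj, hXY, hX, hY, hcut⟩
    · exact ih _ (card_erase_lt_of_mem hv) (h.erase hα hn hv hdeg) rfl
    wlog hYX : #Y ≤ #X generalizing X Y
    · exact this Y X hdisj.symm (union_comm X Y ▸ hXY) hY hX (eBetween_comm L Y X ▸ hcut)
        (by omega)
    have hU0 : 0 < #U := Nat.pos_of_ne_zero fun h0 => by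
      simp only [h0, CharP.cast_eq_zero] at hcut
      linarith [Nat.cast_nonneg (α := ℝ) (eBetween L X Y)]
    have hY0 : (0 : ℝ) < #Y := (mul_pos (by positivity) (by exact_mod_cast hU0)).trans_le hY
    have hXU : #X < #U := by
      rw [← hXY, card_union_of_disjoint hdisj]
      exact Nat.lt_add_of_pos_right (by exact_mod_cast hY0)
    exact ih _ hXU (h.of_sparse_cut hα hdisj hXY hY hcut hYX) rfl

end CleaningInvariant

theorem robust_subgraphs_inseparable (α : ℝ) (hα : 0 < α) :
    ∃ n₀ : ℕ,
      ∀ (V : Type) [Fintype V] [DecidableEq V]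
        (L : SimpleGraph V) [DecidableRel L.Adj],
        n₀ ≤ Fintype.card V →
        (5/9 + α) * (Fintype.card V : ℝ) ^ 2 / 2 ≤ (L.edgeFinset.card : ℝ) →
        ∃ U : Finset V,
          (2/3 + α/2) * (Fintype.card V : ℝ) ≤ (U.card : ℝ) ∧
          (eBetween L U Uᶜ : ℝ) ≤ α * (Fintype.card V : ℝ) ^ 2 / 4 ∧
          (5/9 + α/2) * (Fintype.card V : ℝ) ^ 2 / 2
              - ((Fintype.card V : ℝ) - (U.card : ℝ)) ^ 2 / 2 ≤ (eIn L U : ℝ) ∧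
          IsInseparable L U (α/72) := by
  refine ⟨3, fun V _ _ L _ hn hE => ?_⟩
  obtain ⟨U, hU, hins⟩ := (CleaningInvariant.univ hE).exists_isInseparable hα hn
  exact ⟨U, hU.card_ge_two_thirds hα, hU.eBetween_le_quarter hα.le, hU.eIn_ge_of_half hα.le, hins⟩
end

section
/- Let V be a set of n vertices and let R=(U,E) and R'=(U',E') be graphs with U,U' ⊆ V. If for some α>0 we have |U| ≥ (2/3+α/2)n and |E| ≥ (5/9+α/2)n²/2 − (n−|U|)²/2, and also |U'| ≥ (2/3+α/2)n and |E'| ≥ (5/9+α/2)n²/2 − (n−|U'|)²/2, then |E∩E'| ≥ αn²/2. -/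
open Finset

variable {V : Type} [Fintype V] [DecidableEq V]

/-! Edges of `R` lie inside `U` and those of `R'` inside `U'`, so counting ordered pairs,
`2|E ∪ E'| ≤ u(u-1) + u'(u'-1) - t(t-1)` with `t = |U ∩ U'| ≥ u + u' - n`. Inclusion–exclusion
turns this into a lower bound for `|E ∩ E'|`; substituting the edge bounds leaves, up to
nonnegative terms, `(1/18 + α/2) n² - (u - u')²/2`, which is at least `α n²/2` because both
`u` and `u'` lie in `[(2/3 + α/2) n, n]`, so `|u - u'| ≤ n/3`. -/

theorem Finset.cast_card_offDiag {α R : Type*} [DecidableEq α] [CommRing R] (s : Finset α) :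
    (#s.offDiag : R) = #s ^ 2 - #s := by
  rw [offDiag_card, Nat.cast_sub (Nat.le_mul_self _)]
  push_cast
  ring

section EdgeCounting

variable {W : Type*} [Fintype W]

theorem SimpleGraph.two_mul_card_edgeFinset_le_of_adj_mem {G : SimpleGraph W}
    [DecidableRel G.Adj] {s : Finset (W × W)} (h : ∀ u v, G.Adj u v → (u, v) ∈ s) :
    2 * #G.edgeFinset ≤ #s := by
  rw [two_mul_card_edgeFinset]
  exact card_le_card fun ⟨u, v⟩ huv => h u v (by simpa using huv)

variable [DecidableEq W] {R R' : SimpleGraph W} [DecidableRel R.Adj] [DecidableRel R'.Adj]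
  {U U' : Finset W}

theorem SimpleGraph.two_mul_card_edgeFinset_union_add_le
    (hR : ∀ u v, R.Adj u v → u ∈ U ∧ v ∈ U) (hR' : ∀ u v, R'.Adj u v → u ∈ U' ∧ v ∈ U') :
    2 * #(R.edgeFinset ∪ R'.edgeFinset) + #(U ∩ U').offDiag ≤ #U.offDiag + #U'.offDiag := by
  have hdarts : ∀ u v, (R ⊔ R').Adj u v → (u, v) ∈ U.offDiag ∪ U'.offDiag := by
    rintro u v (h | h)
    · exact mem_union_left _ (mem_offDiag.2 ⟨(hR u v h).1, (hR u v h).2, h.ne⟩)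
    · exact mem_union_right _ (mem_offDiag.2 ⟨(hR' u v h).1, (hR' u v h).2, h.ne⟩)
  rw [← edgeFinset_sup, offDiag_inter, ← card_union_add_card_inter]
  exact Nat.add_le_add_right (by convert two_mul_card_edgeFinset_le_of_adj_mem hdarts) _

theorem SimpleGraph.le_card_edgeFinset_inter
    (hR : ∀ u v, R.Adj u v → u ∈ U ∧ v ∈ U) (hR' : ∀ u v, R'.Adj u v → u ∈ U' ∧ v ∈ U') :
    (#R.edgeFinset + #R'.edgeFinset : ℝ)
        - ((#U ^ 2 - #U) + (#U' ^ 2 - #U') - (#(U ∩ U') ^ 2 - #(U ∩ U'))) / 2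
      ≤ #(R.edgeFinset ∩ R'.edgeFinset) := by
  have hunion : (2 * #(R.edgeFinset ∪ R'.edgeFinset) + #(U ∩ U').offDiag : ℝ)
      ≤ #U.offDiag + #U'.offDiag := by
    exact_mod_cast two_mul_card_edgeFinset_union_add_le hR hR'
  have hincl : (#(R.edgeFinset ∪ R'.edgeFinset) + #(R.edgeFinset ∩ R'.edgeFinset) : ℝ)
      = #R.edgeFinset + #R'.edgeFinset := by
    exact_mod_cast card_union_add_card_inter _ _
  rw [cast_card_offDiag, cast_card_offDiag, cast_card_offDiag] at hunion
  linarith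

end EdgeCounting

theorem robust_edge_bound_arith {α n u u' t : ℝ} (hα : 0 ≤ α) (hn : 0 ≤ n)
    (hu : (2/3 + α/2) * n ≤ u) (hun : u ≤ n) (hu' : (2/3 + α/2) * n ≤ u') (hu'n : u' ≤ n)
    (ht : u + u' - n ≤ t) (htu : t ≤ u) :
    α * n ^ 2 / 2 ≤ ((5/9 + α/2) * n ^ 2 / 2 - (n - u) ^ 2 / 2)
        + ((5/9 + α/2) * n ^ 2 / 2 - (n - u') ^ 2 / 2)
        - ((u ^ 2 - u) + (u' ^ 2 - u') - (t ^ 2 - t)) / 2 := by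
  have hαn : 0 ≤ α * n := mul_nonneg hα hn
  have hdiff : (u - u') ^ 2 ≤ (n / 3) ^ 2 := sq_le_sq' (by linarith) (by linarith)
  have ht2 : (u + u' - n) ^ 2 ≤ t ^ 2 := pow_le_pow_left₀ (by linarith) ht 2
  have hu'0 : 0 ≤ u' := by linarith
  linear_combination (hdiff + ht2 + htu + hu'0) / 2

theorem robust_subgraphs_intersect
    (V : Type) [Fintype V] [DecidableEq V] (α : ℝ) (hα : 0 < α)
    (U U' : Finset V) (R R' : SimpleGraph V) [DecidableRel R.Adj] [DecidableRel R'.Adj]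
    (hRU : ∀ u v : V, R.Adj u v → u ∈ U ∧ v ∈ U)
    (hR'U' : ∀ u v : V, R'.Adj u v → u ∈ U' ∧ v ∈ U')
    (hU : (2/3 + α/2) * (Fintype.card V : ℝ) ≤ (U.card : ℝ))
    (hE : (5/9 + α/2) * (Fintype.card V : ℝ) ^ 2 / 2
        - ((Fintype.card V : ℝ) - (U.card : ℝ)) ^ 2 / 2 ≤ (R.edgeFinset.card : ℝ))
    (hU' : (2/3 + α/2) * (Fintype.card V : ℝ) ≤ (U'.card : ℝ))
    (hE' : (5/9 + α/2) * (Fintype.card V : ℝ) ^ 2 / 2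
        - ((Fintype.card V : ℝ) - (U'.card : ℝ)) ^ 2 / 2 ≤ (R'.edgeFinset.card : ℝ)) :
    α * (Fintype.card V : ℝ) ^ 2 / 2 ≤ ((R.edgeFinset ∩ R'.edgeFinset).card : ℝ) := by
  have hUn : (#U : ℝ) ≤ Fintype.card V := mod_cast card_le_univ U
  have hU'n : (#U' : ℝ) ≤ Fintype.card V := mod_cast card_le_univ U'
  have hinter : (#U + #U' - Fintype.card V : ℝ) ≤ #(U ∩ U') := by
    have hincl : (#(U ∪ U') + #(U ∩ U') : ℝ) = #U + #U' :=
      mod_cast card_union_add_card_inter U U'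
    have hunion : (#(U ∪ U') : ℝ) ≤ Fintype.card V := mod_cast card_le_univ _
    linarith
  have hinterU : (#(U ∩ U') : ℝ) ≤ #U := mod_cast card_le_card inter_subset_left
  have harith := robust_edge_bound_arith hα.le (Nat.cast_nonneg _) hU hUn hU' hU'n hinter hinterU
  linarith [SimpleGraph.le_card_edgeFinset_inter hRU hR'U']
end

section
/- Let H=(V,E) be a 3-uniform hypergraph on n vertices. Call an edge {x,y,z} ∈ E central if n/d(x,y) + n/d(x,z) + n/d(y,z) ≤ 28/5. If yy′z is a central edge with d(y,y′) ≥ d(y,z) ≥ d(y′,z), then |N(y,z)∩N(y,y′)| ≥ n/28, |N(y′,z)∩N(y,y′)| ≥ n/28, and d(y,z) > 5n/12. -/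
open Finset

variable {V : Type} [Fintype V] [DecidableEq V]

/-! The pair degrees `d₁ ≥ d₂ ≥ d₃` of a central edge satisfy `d₁ + d₃ ≥ 29n/28` and
`d₂ > 5n/12`; in a 3-uniform hypergraph `d(u,v) = |N(u,v)|`, so the two intersection bounds
follow from `|A ∩ B| ≥ |A| + |B| - n`. The only real estimate is the first one, a weighted
Cauchy–Schwarz inequality. -/

namespace Finset

variable {α : Type*} [DecidableEq α]

theorem ne_of_card_triple_eq_three {a b c : α} (h : #({a, b, c} : Finset α) = 3) :
    a ≠ b ∧ a ≠ c ∧ b ≠ c := by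
  refine ⟨?_, ?_, ?_⟩ <;> rintro rfl <;>
    simp only [insert_eq_of_mem, mem_insert, mem_singleton, true_or, or_true] at h <;>
    exact (card_le_two.trans_lt (by norm_num : 2 < 3)).ne h

theorem exists_eq_triple_of_card_eq_three {e : Finset α} (he : #e = 3) {u v : α}
    (hu : u ∈ e) (hv : v ∈ e) (huv : u ≠ v) : ∃ w, e = {u, v, w} := by
  have hsub : {u, v} ⊆ e := insert_subset hu (singleton_subset_iff.2 hv)
  obtain ⟨w, hw⟩ := card_eq_one.1 (show #(e \ {u, v}) = 1 by
    rw [card_sdiff_of_subset hsub, he, card_pair huv])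
  refine ⟨w, ?_⟩
  rw [← union_sdiff_of_subset hsub, hw, insert_union, singleton_union]

theorem card_add_card_sub_card_univ_le_card_inter [Fintype α] (s t : Finset α) :
    (#s + #t - Fintype.card α : ℝ) ≤ #(s ∩ t) := by
  rw [cast_card_inter]
  have : #(s ∪ t) ≤ Fintype.card α := card_le_univ _
  linarith [(Nat.cast_le (α := ℝ)).2 this]

end Finset

open Finset

theorem pairDeg_eq_card_jointNbhd {E : Finset (Finset V)} (hE : ∀ e ∈ E, #e = 3) {u v : V}
    (huv : u ≠ v) : pairDeg E u v = #(jointNbhd E u v) := by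
  symm
  refine card_nbij (fun w => {u, v, w}) ?_ ?_ ?_
  · intro w hw
    simp_all [jointNbhd]
  · intro w hw w' _ hww'
    obtain ⟨-, hwu, hwv⟩ := ne_of_card_triple_eq_three (hE _ (by simpa [jointNbhd] using hw))
    have : w ∈ ({u, v, w'} : Finset V) := by simp only at hww'; simp [← hww']
    rcases mem_insert.1 this with h | h
    · exact absurd h.symm hwu
    · exact (mem_insert.1 h).resolve_left hwv.symm |> mem_singleton.1
  · intro e he
    obtain ⟨heE, hu, hv⟩ := mem_filter.1 he
    obtain ⟨w, rfl⟩ := exists_eq_triple_of_card_eq_three (hE e heE) hu hv huv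
    exact ⟨w, by simpa [jointNbhd] using heE, rfl⟩

/-- By Cauchy–Schwarz, `(a + c) (2/a + 1/c) ≥ (√2 + 1)² = 3 + 2√2 > 29/5`. -/
theorem le_add_of_two_div_add_div_le {n a c : ℝ} (hn : 0 ≤ n) (ha : 0 < a) (hc : 0 < c)
    (h : 2 * (n / a) + n / c ≤ 28 / 5) : 29 * n / 28 ≤ a + c := by
  have hcs : 29 * a * c ≤ 5 * (a + c) * (a + 2 * c) := by
    nlinarith [sq_nonneg (5 * a - 7 * c), sq_nonneg c]
  have h' : 5 * n * (a + 2 * c) ≤ 28 * a * c := by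
    rw [mul_div_assoc', div_add_div _ _ ha.ne' hc.ne', div_le_div_iff₀ (by positivity) (by norm_num)] at h
    linarith
  have hac : a * c * (29 * n) ≤ a * c * (28 * (a + c)) := by
    nlinarith [mul_le_mul_of_nonneg_left hcs hn, mul_le_mul_of_nonneg_left h' (add_pos ha hc).le]
  linarith [le_of_mul_le_mul_left hac (mul_pos ha hc)]

theorem central_triple_bounds {n d₁ d₂ d₃ : ℝ} (hn : 0 < n) (h₃ : 0 < d₃) (h₃₂ : d₃ ≤ d₂)
    (h₂₁ : d₂ ≤ d₁) (h₁ : d₁ ≤ n) (hc : n / d₁ + n / d₂ + n / d₃ ≤ 28 / 5) :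
    29 * n / 28 ≤ d₁ + d₃ ∧ 5 * n / 12 < d₂ := by
  have h₂ : 0 < d₂ := h₃.trans_le h₃₂
  have h₁₂ : n / d₁ ≤ n / d₂ := div_le_div_of_nonneg_left hn.le h₂ h₂₁
  have h₂₃ : n / d₂ ≤ n / d₃ := div_le_div_of_nonneg_left hn.le h₃ h₃₂
  have hone : 1 ≤ n / d₁ := (one_le_div (h₂.trans_le h₂₁)).2 h₁
  refine ⟨le_add_of_two_div_add_div_le hn.le (h₂.trans_le h₂₁) h₃ (by linarith), ?_⟩
  have : n / d₂ ≤ 23 / 10 := by linarith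
  rw [div_le_iff₀ h₂] at this
  linarith

theorem central_edge_properties
    (V : Type) [Fintype V] [DecidableEq V] (E : Finset (Finset V))
    (hE3 : ∀ e ∈ E, e.card = 3)
    (y y' z : V)
    (he : ({y, y', z} : Finset V) ∈ E)
    (hcentral : (Fintype.card V : ℝ) / (pairDeg E y y' : ℝ)
        + (Fintype.card V : ℝ) / (pairDeg E y z : ℝ)
        + (Fintype.card V : ℝ) / (pairDeg E y' z : ℝ) ≤ 28/5)
    (h1 : pairDeg E y z ≤ pairDeg E y y')
    (h2 : pairDeg E y' z ≤ pairDeg E y z) :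
    (Fintype.card V : ℝ) / 28 ≤ ((jointNbhd E y z ∩ jointNbhd E y y').card : ℝ) ∧
    (Fintype.card V : ℝ) / 28 ≤ ((jointNbhd E y' z ∩ jointNbhd E y y').card : ℝ) ∧
    5 * (Fintype.card V : ℝ) / 12 < (pairDeg E y z : ℝ) := by
  obtain ⟨hyy', hyz, hy'z⟩ := ne_of_card_triple_eq_three (hE3 _ he)
  have hn : (0 : ℝ) < Fintype.card V := by exact_mod_cast Fintype.card_pos_iff.2 ⟨y⟩
  have hd₃ : 0 < pairDeg E y' z := card_pos.2 ⟨_, mem_filter.2 ⟨he, by simp, by simp⟩⟩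
  simp only [pairDeg_eq_card_jointNbhd hE3 hyy', pairDeg_eq_card_jointNbhd hE3 hyz,
    pairDeg_eq_card_jointNbhd hE3 hy'z] at hcentral h1 h2 hd₃ ⊢
  obtain ⟨hsum, hmid⟩ := central_triple_bounds hn (by exact_mod_cast hd₃) (by exact_mod_cast h2)
    (by exact_mod_cast h1) (by exact_mod_cast card_le_univ _) hcentral
  have h₂₃ : (#(jointNbhd E y' z) : ℝ) ≤ #(jointNbhd E y z) := by exact_mod_cast h2
  refine ⟨?_, ?_, hmid⟩
  · linarith [card_add_card_sub_card_univ_le_card_inter (jointNbhd E y z) (jointNbhd E y y')]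
  · linarith [card_add_card_sub_card_univ_le_card_inter (jointNbhd E y' z) (jointNbhd E y y')]
end
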